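/- arXiv:1311.2205 — 4 statements merged into one kernel-verified Lean document; each statement's English description precedes it below -/
import Mathlib

section
/- Let p > 1, c, e ∈ L¹([0,T], ℝ≥0), and let x ∈ W^{1,1}([0,T], ℝ≥0) ∩ C⁰([0,T], ℝ≥0) satisfy ẋ ≤ c(t)x^p + e(t) with x(0) = x₀ ≥ 0. Then for all t ∈ [0,T] such that (p−1)·(x₀ + ∫₀ᵗ e(s) ds)^{p−1} · ∫₀ᵗ c(s) ds < 1, one has x(t) ≤ (x₀ + ∫₀ᵗ e(s) ds) · (1 − (p−1)(x₀ + ∫₀ᵗ e(s) ds)^{p−1} ∫₀ᵗ c(s) ds)^{−1/(p−1)}. -/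
/-!
With `ρ = c xᵖ` and `K = x₀ + ∫₀ᵗ e`, integrating the differential inequality gives
`x s ≤ W s := K + ∫₀ˢ ρ` on `[0, t]`. For `K > 0` the function `W ^ (1 - p)` is absolutely
continuous (a `C¹` function of the absolutely continuous `W`), and a.e. its derivative
`(1 - p) W⁻ᵖ ρ` is at least `-(p - 1) c` because `x ≤ W`. Integrating,
`W t ^ (1 - p) ≥ K ^ (1 - p) - (p - 1) ∫₀ᵗ c`, which rearranges to the bound; the case `K = 0`
follows by letting `K` decrease to `0`.
-/

open MeasureTheory Set intervalIntegral Filter Topology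

theorem LipschitzOnWith.comp_absolutelyContinuousOnInterval {X Y : Type*} [PseudoMetricSpace X]
    [PseudoMetricSpace Y] {f : ℝ → X} {g : X → Y} {K : NNReal} {s : Set X} {a b : ℝ}
    (hg : LipschitzOnWith K g s) (hf : AbsolutelyContinuousOnInterval f a b)
    (hfs : MapsTo f (uIcc a b) s) : AbsolutelyContinuousOnInterval (g ∘ f) a b := by
  have hlim := Tendsto.const_mul (K : ℝ) (show Tendsto _ _ _ from hf)
  rw [mul_zero] at hlim
  refine squeeze_zero' (Eventually.of_forall fun _ ↦ Finset.sum_nonneg fun _ _ ↦ dist_nonneg)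
    ?_ hlim
  filter_upwards [mem_inf_of_right (mem_principal_self _)] with E hE
  rw [Finset.mul_sum]
  exact Finset.sum_le_sum fun i hi ↦
    hg.dist_le_mul _ (hfs (hE.1 i hi).1) _ (hfs (hE.1 i hi).2)

-- The image of `uIcc a b` is a compact interval, on which a `C¹` function is Lipschitz.
theorem ContDiffOn.comp_absolutelyContinuousOnInterval {f g : ℝ → ℝ} {a b : ℝ}
    (hg : ContDiffOn ℝ 1 g (f '' uIcc a b)) (hf : AbsolutelyContinuousOnInterval f a b) :
    AbsolutelyContinuousOnInterval (g ∘ f) a b := by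
  have hcont := hf.continuousOn
  obtain ⟨K, hK⟩ := hg.exists_lipschitzOnWith one_ne_zero
    (isPreconnected_uIcc.image f hcont).convex (isCompact_uIcc.image_of_continuousOn hcont)
  exact hK.comp_absolutelyContinuousOnInterval hf (mapsTo_image f _)

theorem le_add_integral_of_ae_deriv_le {x x' g : ℝ → ℝ} {a T : ℝ}
    (hx' : IntegrableOn x' (Icc a T)) (hg : IntegrableOn g (Icc a T))
    (hxAC : ∀ t ∈ Icc a T, x t = x a + ∫ s in a..t, x' s)
    (hle : ∀ᵐ t ∂(volume.restrict (Icc a T)), x' t ≤ g t) :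
    ∀ t ∈ Icc a T, x t ≤ x a + ∫ s in a..t, g s := by
  intro t ht
  have hsub : Icc a t ⊆ Icc a T := Icc_subset_Icc_right ht.2
  rw [hxAC t ht]
  gcongr
  exact integral_mono_ae_restrict ht.1
    ((intervalIntegrable_iff_integrableOn_Icc_of_le ht.1).2 (hx'.mono_set hsub))
    ((intervalIntegrable_iff_integrableOn_Icc_of_le ht.1).2 (hg.mono_set hsub))
    (ae_restrict_of_ae_restrict_of_subset hsub hle)

/-- The explicit solution of `y' = c y ^ p`, `y 0 = K`, at a time where `∫ c = C`. -/
noncomputable def bihariBound (p K C : ℝ) : ℝ :=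
  K * (1 - (p - 1) * K ^ (p - 1) * C) ^ (-(1 / (p - 1)))

theorem le_bihariBound_of_rpow_one_sub_le {p K C y : ℝ} (hp : 1 < p) (hK : 0 < K)
    (hsmall : (p - 1) * K ^ (p - 1) * C < 1) (h : K ^ (1 - p) - (p - 1) * C ≤ y ^ (1 - p)) :
    y ≤ bihariBound p K C := by
  have hp1 : 0 < p - 1 := by linarith
  have hD : 0 < 1 - (p - 1) * K ^ (p - 1) * C := by linarith
  rcases le_or_gt y 0 with hy | hy
  · exact hy.trans (by unfold bihariBound; positivity)
  have hq : (1 - p) * (-(1 / (p - 1))) = 1 := by field_simp; ring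
  have hfactor : K ^ (1 - p) - (p - 1) * C = K ^ (1 - p) * (1 - (p - 1) * K ^ (p - 1) * C) := by
    have : K ^ (1 - p) * K ^ (p - 1) = 1 := by rw [← Real.rpow_add hK]; norm_num
    linear_combination (p - 1) * C * this
  calc y = (y ^ (1 - p)) ^ (-(1 / (p - 1))) := by rw [← Real.rpow_mul hy.le, hq, Real.rpow_one]
    _ ≤ (K ^ (1 - p) * (1 - (p - 1) * K ^ (p - 1) * C)) ^ (-(1 / (p - 1))) := by
        rw [← hfactor]
        refine Real.rpow_le_rpow_of_nonpos ?_ h ?_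
        · rw [hfactor]; positivity
        · have : 0 < 1 / (p - 1) := by positivity
          linarith
    _ = bihariBound p K C := by
        rw [Real.mul_rpow (by positivity) hD.le, ← Real.rpow_mul hK.le, hq, Real.rpow_one,
          bihariBound]

theorem continuousAt_bihariBound {p K C : ℝ} (hp : 1 < p)
    (hsmall : (p - 1) * K ^ (p - 1) * C < 1) : ContinuousAt (fun k ↦ bihariBound p k C) K := by
  have hpow : ContinuousAt (fun k : ℝ ↦ k ^ (p - 1)) K :=
    continuousAt_id.rpow_const (Or.inr (by linarith))
  exact continuousAt_id.mul <| (continuousAt_const.sub ((continuousAt_const.mul hpow).mul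
    continuousAt_const)).rpow_const (Or.inl (by simp only [Pi.sub_apply, Pi.mul_apply]; linarith))

section Bihari

variable {c x : ℝ → ℝ} {p K t : ℝ}

theorem rpow_one_sub_sub_le_rpow_one_sub_add_integral (hp : 1 < p) (hK : 0 < K) (ht : 0 ≤ t)
    (hc : IntegrableOn c (Icc 0 t)) (hcnn : ∀ s ∈ Icc 0 t, 0 ≤ c s)
    (hx : ContinuousOn x (Icc 0 t)) (hxnn : ∀ s ∈ Icc 0 t, 0 ≤ x s)
    (hxle : ∀ s ∈ Icc 0 t, x s ≤ K + ∫ r in 0..s, c r * x r ^ p) :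
    K ^ (1 - p) - (p - 1) * ∫ s in 0..t, c s ≤ (K + ∫ r in 0..t, c r * x r ^ p) ^ (1 - p) := by
  set ρ : ℝ → ℝ := fun r ↦ c r * x r ^ p
  set F : ℝ → ℝ := fun s ↦ ∫ r in 0..s, ρ r
  set φ : ℝ → ℝ := fun s ↦ (K + F s) ^ (1 - p)
  have hmem : (0 : ℝ) ∈ uIcc 0 t := left_mem_uIcc
  have hρ : IntervalIntegrable ρ volume 0 t :=
    (intervalIntegrable_iff_integrableOn_Icc_of_le ht).2 <|
      hc.mul_continuousOn (hx.rpow_const fun _ _ ↦ Or.inr (by linarith)) isCompact_Icc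
  have hF : ∀ s ∈ uIcc 0 t, 0 ≤ F s := by
    intro s hs
    rw [uIcc_of_le ht] at hs
    exact integral_nonneg hs.1 fun r hr ↦ mul_nonneg (hcnn r ⟨hr.1, hr.2.trans hs.2⟩)
      (Real.rpow_nonneg (hxnn r ⟨hr.1, hr.2.trans hs.2⟩) p)
  have hφ : AbsolutelyContinuousOnInterval φ 0 t := by
    refine ContDiffOn.comp_absolutelyContinuousOnInterval (g := fun y ↦ (K + y) ^ (1 - p)) ?_
      (hρ.absolutelyContinuousOnInterval_intervalIntegral hmem)
    rintro _ ⟨s, hs, rfl⟩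
    exact ((contDiffAt_const.add contDiffAt_id).rpow_const_of_ne
      (by have := hF s hs; simp only [id]; linarith)).contDiffWithinAt
  have hderiv : ∀ᵐ s ∂volume.restrict (Icc 0 t), -(p - 1) * c s ≤ deriv φ s := by
    rw [ae_restrict_iff' measurableSet_Icc]
    filter_upwards [hρ.ae_hasDerivAt_integral] with s hs hst
    have hst' : s ∈ uIcc 0 t := by rwa [uIcc_of_le ht]
    have hKF : 0 < K + F s := by linarith [hF s hst']
    rw [(((hs hst' 0 hmem).const_add K).rpow_const (Or.inl hKF.ne')).deriv]
    have hpow : x s ^ p * (K + F s) ^ (1 - p - 1) ≤ 1 := by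
      rw [show 1 - p - 1 = -p by ring, Real.rpow_neg hKF.le, ← div_eq_mul_inv,
        div_le_one (by positivity)]
      exact Real.rpow_le_rpow (hxnn s hst) (hxle s hst) (by linarith)
    have := mul_le_mul_of_nonneg_left hpow (mul_nonneg (hcnn s hst) (by linarith : 0 ≤ p - 1))
    simp only [ρ]
    nlinarith
  have hint := integral_mono_ae_restrict ht
    (((intervalIntegrable_iff_integrableOn_Icc_of_le ht).2 hc).const_mul _)
    hφ.intervalIntegrable_deriv hderiv
  rw [hφ.integral_deriv_eq_sub, intervalIntegral.integral_const_mul] at hint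
  simp only [φ, F, integral_same, add_zero] at hint
  linarith

theorem le_bihariBound_of_le_add_integral_of_pos (hp : 1 < p) (hK : 0 < K) (ht : 0 ≤ t)
    (hc : IntegrableOn c (Icc 0 t)) (hcnn : ∀ s ∈ Icc 0 t, 0 ≤ c s)
    (hx : ContinuousOn x (Icc 0 t)) (hxnn : ∀ s ∈ Icc 0 t, 0 ≤ x s)
    (hxle : ∀ s ∈ Icc 0 t, x s ≤ K + ∫ r in 0..s, c r * x r ^ p)
    (hsmall : (p - 1) * K ^ (p - 1) * ∫ s in 0..t, c s < 1) :
    x t ≤ bihariBound p K (∫ s in 0..t, c s) :=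
  (hxle t ⟨ht, le_rfl⟩).trans <| le_bihariBound_of_rpow_one_sub_le hp hK hsmall <|
    rpow_one_sub_sub_le_rpow_one_sub_add_integral hp hK ht hc hcnn hx hxnn hxle

-- At `K = 0` the power `y ^ (1 - p)` is singular, so we let `K` decrease to its value.
theorem le_bihariBound_of_le_add_integral (hp : 1 < p) (hK : 0 ≤ K) (ht : 0 ≤ t)
    (hc : IntegrableOn c (Icc 0 t)) (hcnn : ∀ s ∈ Icc 0 t, 0 ≤ c s)
    (hx : ContinuousOn x (Icc 0 t)) (hxnn : ∀ s ∈ Icc 0 t, 0 ≤ x s)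
    (hxle : ∀ s ∈ Icc 0 t, x s ≤ K + ∫ r in 0..s, c r * x r ^ p)
    (hsmall : (p - 1) * K ^ (p - 1) * ∫ s in 0..t, c s < 1) :
    x t ≤ bihariBound p K (∫ s in 0..t, c s) := by
  have hcont := continuousAt_bihariBound hp hsmall
  have hsmall' : ∀ᶠ k in 𝓝 K, (p - 1) * k ^ (p - 1) * ∫ s in 0..t, c s < 1 :=
    ((continuousAt_const.mul (continuousAt_id.rpow_const (Or.inr (by linarith)))).mul
      continuousAt_const).eventually_lt continuousAt_const hsmall
  have hev : ∀ᶠ k in 𝓝[>] K, x t ≤ bihariBound p k (∫ s in 0..t, c s) := by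
    filter_upwards [self_mem_nhdsWithin, nhdsWithin_le_nhds hsmall'] with k hk hk'
    refine le_bihariBound_of_le_add_integral_of_pos hp (hK.trans_lt hk) ht hc hcnn hx hxnn
      (fun s hs ↦ (hxle s hs).trans ?_) hk'
    linarith [mem_Ioi.1 hk]
  exact ge_of_tendsto (hcont.tendsto.mono_left nhdsWithin_le_nhds) hev

end Bihari

theorem cp_type_I_general (T : ℝ) (p : ℝ) (hp : 1 < p)
    (c e x x' : ℝ → ℝ) (x₀ : ℝ) (hx₀ : 0 ≤ x₀)
    (hc : IntegrableOn c (Icc 0 T)) (hcnn : ∀ t ∈ Icc (0:ℝ) T, 0 ≤ c t)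
    (he : IntegrableOn e (Icc 0 T)) (henn : ∀ t ∈ Icc (0:ℝ) T, 0 ≤ e t)
    (hxnn : ∀ t ∈ Icc (0:ℝ) T, 0 ≤ x t)
    (hx' : IntegrableOn x' (Icc 0 T)) (hxc : ContinuousOn x (Icc 0 T))
    (hxAC : ∀ t ∈ Icc (0:ℝ) T, x t = x 0 + ∫ s in (0:ℝ)..t, x' s)
    (hineq : ∀ᵐ t ∂(volume.restrict (Icc (0:ℝ) T)), x' t ≤ c t * x t ^ p + e t)
    (hx0 : x 0 = x₀) :
    ∀ t ∈ Icc (0:ℝ) T,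
      (p - 1) * (x₀ + ∫ s in (0:ℝ)..t, e s) ^ (p - 1) * (∫ s in (0:ℝ)..t, c s) < 1 →
      x t ≤ (x₀ + ∫ s in (0:ℝ)..t, e s) *
        (1 - (p - 1) * (x₀ + ∫ s in (0:ℝ)..t, e s) ^ (p - 1) *
          (∫ s in (0:ℝ)..t, c s)) ^ (-(1 / (p - 1))) := by
  intro t ht hsmall
  have hsub : Icc 0 t ⊆ Icc 0 T := Icc_subset_Icc_right ht.2
  have hii {f : ℝ → ℝ} (hf : IntegrableOn f (Icc 0 T)) {s : ℝ} (hs : s ∈ Icc (0 : ℝ) T) :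
      IntervalIntegrable f volume 0 s :=
    (intervalIntegrable_iff_integrableOn_Icc_of_le hs.1).2 (hf.mono_set (Icc_subset_Icc_right hs.2))
  have hρ : IntegrableOn (fun r ↦ c r * x r ^ p) (Icc 0 T) :=
    hc.mul_continuousOn (hxc.rpow_const fun _ _ ↦ Or.inr (by linarith)) isCompact_Icc
  have hxle : ∀ s ∈ Icc 0 t,
      x s ≤ (x₀ + ∫ r in (0:ℝ)..t, e r) + ∫ r in (0:ℝ)..s, c r * x r ^ p := by
    intro s hs
    have hsT := hsub hs
    have he_mono : ∫ r in (0:ℝ)..s, e r ≤ ∫ r in (0:ℝ)..t, e r :=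
      integral_mono_interval le_rfl hs.1 hs.2
        ((ae_restrict_iff' measurableSet_Ioc).2 (Eventually.of_forall fun r hr ↦
          henn r ⟨hr.1.le, hr.2.trans ht.2⟩)) (hii he ht)
    have := le_add_integral_of_ae_deriv_le (g := fun r ↦ c r * x r ^ p + e r) hx' (hρ.add he)
      hxAC hineq s hsT
    rw [integral_add (hii hρ hsT) (hii he hsT), hx0] at this
    linarith
  have hM : 0 ≤ x₀ + ∫ r in (0:ℝ)..t, e r :=
    add_nonneg hx₀ (integral_nonneg ht.1 fun r hr ↦ henn r (hsub hr))
  exact le_bihariBound_of_le_add_integral hp hM ht.1 (hc.mono_set hsub)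
    (fun s hs ↦ hcnn s (hsub hs)) (hxc.mono hsub) (fun s hs ↦ hxnn s (hsub hs)) hxle hsmall

/-- CP-Type I: explicit upper bound for `ẋ ≤ c(t)x^p + e(t)`. -/
theorem cp_type_I (T : ℝ) (hT : 0 ≤ T) (p : ℝ) (hp : 1 < p)
    (c e x x' : ℝ → ℝ) (x₀ : ℝ) (hx₀ : 0 ≤ x₀)
    (hc : IntegrableOn c (Icc 0 T)) (hcnn : ∀ t ∈ Icc (0:ℝ) T, 0 ≤ c t)
    (he : IntegrableOn e (Icc 0 T)) (henn : ∀ t ∈ Icc (0:ℝ) T, 0 ≤ e t)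
    (hxnn : ∀ t ∈ Icc (0:ℝ) T, 0 ≤ x t)
    (hx' : IntegrableOn x' (Icc 0 T)) (hxc : ContinuousOn x (Icc 0 T))
    (hxAC : ∀ t ∈ Icc (0:ℝ) T, x t = x 0 + ∫ s in (0:ℝ)..t, x' s)
    (hineq : ∀ᵐ t ∂(volume.restrict (Icc (0:ℝ) T)), x' t ≤ c t * x t ^ p + e t)
    (hx0 : x 0 = x₀) :
    ∀ t ∈ Icc (0:ℝ) T,
      (p - 1) * (x₀ + ∫ s in (0:ℝ)..t, e s) ^ (p - 1) * (∫ s in (0:ℝ)..t, c s) < 1 →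
      x t ≤ (x₀ + ∫ s in (0:ℝ)..t, e s) *
        (1 - (p - 1) * (x₀ + ∫ s in (0:ℝ)..t, e s) ^ (p - 1) *
          (∫ s in (0:ℝ)..t, c s)) ^ (-(1 / (p - 1))) :=
  cp_type_I_general T p hp c e x x' x₀ hx₀ hc hcnn he henn hxnn hx' hxc hxAC hineq hx0
end

section
/- For any function u on the circle of circumference 2π with zero mean and u ∈ H¹, Agmon's inequality holds with constant one: ‖u‖_{L∞} ≤ ‖u‖_{L²}^{1/2} · ‖u_x‖_{L²}^{1/2}. -/
/-!
Let `c` be a zero of `u`, which exists because `u` has mean zero. For `x` in the period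
`[c, c + 2π)`, `u x ^ 2 = ∫ c..x, (u²)' = -∫ x..c+2π, (u²)'`; adding the two resulting bounds
gives `2 u(x)² ≤ ∫ over one period of |(u²)'| = 2 ∫ |u| |u'|`, and Cauchy–Schwarz bounds
`∫ |u| |u'|` by `‖u‖₂ ‖u'‖₂`.
-/

open MeasureTheory intervalIntegral Real

theorem Function.Periodic.deriv {f : ℝ → ℝ} {T : ℝ} (hf : Function.Periodic f T) :
    Function.Periodic (deriv f) T := fun x => by
  rw [← deriv_comp_add_const, hf.funext]

theorem exists_eq_zero_of_intervalIntegral_eq_zero {f : ℝ → ℝ} {a b : ℝ} (hab : a ≠ b)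
    (hf : ContinuousOn f (Set.uIcc a b)) (h : ∫ x in a..b, f x = 0) :
    ∃ c ∈ Set.uIoo a b, f c = 0 := by
  simpa [interval_average_eq, h] using exists_eq_interval_average hab hf

theorem intervalIntegral.integral_abs_mul_abs_le {f g : ℝ → ℝ} {a b : ℝ} (hab : a ≤ b)
    (hf : ContinuousOn f (Set.Icc a b)) (hg : ContinuousOn g (Set.Icc a b)) :
    ∫ x in a..b, |f x| * |g x| ≤
      (∫ x in a..b, f x ^ 2) ^ (1 / 2 : ℝ) * (∫ x in a..b, g x ^ 2) ^ (1 / 2 : ℝ) := by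
  have memLp_two : ∀ h : ℝ → ℝ, ContinuousOn h (Set.Icc a b) →
      MemLp h (ENNReal.ofReal 2) (volume.restrict (Set.Ioc a b)) := fun h hh => by
    rw [ENNReal.ofReal_ofNat, memLp_two_iff_integrable_sq
      ((hh.mono Set.Ioc_subset_Icc_self).aestronglyMeasurable measurableSet_Ioc)]
    exact ((hh.pow 2).integrableOn_Icc).mono_set Set.Ioc_subset_Icc_self
  simpa [integral_of_le hab] using
    integral_mul_norm_le_Lp_mul_Lq HolderConjugate.two_two (memLp_two f hf) (memLp_two g hg)

theorem abs_sq_sub_sq_le_integral {u : ℝ → ℝ} (hu : ContDiff ℝ 1 u) {a b : ℝ} (hab : a ≤ b) :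
    |u b ^ 2 - u a ^ 2| ≤ 2 * ∫ x in a..b, |u x| * |deriv u x| := by
  have hcont : Continuous fun x => 2 * u x * deriv u x :=
    (continuous_const.mul hu.continuous).mul (hu.continuous_deriv le_rfl)
  have hsq : ∀ x, HasDerivAt (fun x => u x ^ 2) (2 * u x * deriv u x) x := fun x => by
    simpa using (hu.differentiable one_ne_zero x).hasDerivAt.fun_pow 2
  rw [← integral_eq_sub_of_hasDerivAt (fun x _ => hsq x) (hcont.intervalIntegrable a b),
    ← intervalIntegral.integral_const_mul]
  refine (abs_integral_le_integral_abs hab).trans (le_of_eq (integral_congr fun x _ => ?_))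
  simp only [abs_mul, abs_two, mul_assoc]

theorem sq_le_integral_abs_mul_abs_deriv_of_periodic {u : ℝ → ℝ} {T c : ℝ}
    (hper : Function.Periodic u T) (hu : ContDiff ℝ 1 u) (hT : 0 < T) (hc : u c = 0) (x : ℝ) :
    u x ^ 2 ≤ ∫ y in 0..T, |u y| * |deriv u y| := by
  obtain ⟨y, ⟨hcy, hyc⟩, hxy⟩ := hper.exists_mem_Ico hT x c
  have hint : ∀ a b, IntervalIntegrable (fun y => |u y| * |deriv u y|) volume a b :=
    (hu.continuous.abs.mul (hu.continuous_deriv le_rfl).abs).intervalIntegrable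
  have hshift : ∫ y in c..c + T, |u y| * |deriv u y| = ∫ y in 0..T, |u y| * |deriv u y| := by
    have hper' : Function.Periodic (fun y => |u y| * |deriv u y|) T := fun y => by
      simp only [hper y, hper.deriv y]
    simpa using hper'.intervalIntegral_add_eq c 0
  have left : u y ^ 2 ≤ 2 * ∫ t in c..y, |u t| * |deriv u t| := by
    simpa [hc] using abs_sq_sub_sq_le_integral hu hcy
  have right : u y ^ 2 ≤ 2 * ∫ t in y..c + T, |u t| * |deriv u t| := by
    simpa [hper c, hc] using abs_sq_sub_sq_le_integral hu hyc.le
  rw [hxy, ← hshift, ← integral_add_adjacent_intervals (hint c y) (hint y (c + T))]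
  linarith

/-- Agmon's inequality with optimal constant 1 for zero-mean `2π`-periodic `H¹`
functions: `‖u‖_{L∞} ≤ ‖u‖_{L²}^{1/2} ‖u_x‖_{L²}^{1/2}`. -/
theorem agmon_inequality (u : ℝ → ℝ)
    (hper : Function.Periodic u (2 * Real.pi))
    (hreg : ContDiff ℝ 1 u)
    (hmean : ∫ y in (0:ℝ)..(2 * Real.pi), u y = 0) :
    ∀ x : ℝ, |u x| ≤
      (∫ y in (0:ℝ)..(2 * Real.pi), (u y) ^ 2) ^ ((1:ℝ)/4) *
      (∫ y in (0:ℝ)..(2 * Real.pi), (deriv u y) ^ 2) ^ ((1:ℝ)/4) := by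
  intro x
  have hπ : 0 < 2 * π := by positivity
  obtain ⟨c, -, hc⟩ := exists_eq_zero_of_intervalIntegral_eq_zero hπ.ne
    hreg.continuous.continuousOn hmean
  set A := ∫ y in (0:ℝ)..(2 * π), u y ^ 2
  set C := ∫ y in (0:ℝ)..(2 * π), deriv u y ^ 2
  have hA : 0 ≤ A := integral_nonneg hπ.le fun y _ => sq_nonneg (u y)
  have hC : 0 ≤ C := integral_nonneg hπ.le fun y _ => sq_nonneg (deriv u y)
  have hsq : u x ^ 2 ≤ A ^ (1 / 2 : ℝ) * C ^ (1 / 2 : ℝ) :=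
    (sq_le_integral_abs_mul_abs_deriv_of_periodic hper hreg hπ hc x).trans <|
      integral_abs_mul_abs_le hπ.le hreg.continuous.continuousOn
        (hreg.continuous_deriv le_rfl).continuousOn
  refine abs_le_of_sq_le_sq (hsq.trans_eq ?_) (by positivity)
  rw [mul_pow, ← rpow_natCast, ← rpow_natCast, ← rpow_mul hA, ← rpow_mul hC]
  norm_num
end

section
/- Let y : [0,T] → ℝ≥0 be absolutely continuous, and suppose ẏ(t) ≤ −g(t)·(1 − c·y(t)⁴) for almost every t ∈ [0,T], where g ≥ 0 is measurable, c > 0 is a constant, and c·y(0)⁴ < 1. Then c·y(t)⁴ < 1 and y(t) ≤ y(0) for all t ∈ [0,T]. -/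
open MeasureTheory Set intervalIntegral

/-- Abstract decay argument from the smallness condition: if
`ẏ ≤ -g(t)(1 - c y⁴)` with `g ≥ 0`, `c > 0` and `c y(0)⁴ < 1`, then
`c y(t)⁴ < 1` and `y(t) ≤ y(0)` on `[0,T]`. -/
theorem smallness_decay (T : ℝ) (hT : 0 ≤ T) (y y' g : ℝ → ℝ) (c : ℝ)
    (hc : 0 < c)
    (hynn : ∀ t ∈ Icc (0:ℝ) T, 0 ≤ y t)
    (hg : Measurable g) (hgnn : ∀ t ∈ Icc (0:ℝ) T, 0 ≤ g t)
    (hy' : IntegrableOn y' (Icc 0 T)) (hyc : ContinuousOn y (Icc 0 T))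
    (hAC : ∀ t ∈ Icc (0:ℝ) T, y t = y 0 + ∫ s in (0:ℝ)..t, y' s)
    (hineq : ∀ᵐ t ∂(volume.restrict (Icc (0:ℝ) T)),
      y' t ≤ -g t * (1 - c * y t ^ 4))
    (h0 : c * y 0 ^ 4 < 1) :
    ∀ t ∈ Icc (0:ℝ) T, c * y t ^ 4 < 1 ∧ y t ≤ y 0 := by
  have h0T : (0:ℝ) ∈ Icc (0:ℝ) T := ⟨le_refl 0, hT⟩
  have hb0 : 0 ≤ y 0 := hynn 0 h0T
  -- main claim: y t ≤ y 0 on [0,T]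
  have key : ∀ t ∈ Icc (0:ℝ) T, y t ≤ y 0 := by
    by_contra h
    push_neg at h
    obtain ⟨t₀, ht₀, ht₀y⟩ := h
    -- choose b' with y 0 < b' ≤ y t₀ and c * b'^4 < 1
    have hcont : ContinuousAt (fun ε : ℝ => c * (y 0 + ε) ^ 4) 0 := by fun_prop
    have hev : ∀ᶠ ε in nhds (0:ℝ), c * (y 0 + ε) ^ 4 < 1 := by
      have := hcont.tendsto
      simp only [add_zero] at this
      exact this.eventually_lt_const h0
    have hev' : ∀ᶠ ε in nhdsWithin (0:ℝ) (Ioi 0), c * (y 0 + ε) ^ 4 < 1 ∧ ε ∈ Ioi (0:ℝ) :=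
      (hev.filter_mono nhdsWithin_le_nhds).and self_mem_nhdsWithin
    obtain ⟨ε, hε1, hε0⟩ := hev'.exists
    set b' := min (y t₀) (y 0 + ε) with hb'def
    have hεpos : (0:ℝ) < ε := hε0
    have hb'gt : y 0 < b' := lt_min ht₀y (by linarith)
    have hb'le : b' ≤ y t₀ := min_le_left _ _
    have hb'small : c * b' ^ 4 < 1 := by
      have hb'nn : 0 ≤ b' := le_of_lt (lt_of_le_of_lt hb0 hb'gt)
      have : b' ^ 4 ≤ (y 0 + ε) ^ 4 :=
        pow_le_pow_left₀ hb'nn (min_le_right _ _) 4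
      nlinarith
    -- the set where y ≥ b'
    set A := Icc (0:ℝ) T ∩ y ⁻¹' Ici b' with hA
    have hAne : A.Nonempty := ⟨t₀, ht₀, hb'le⟩
    have hAbdd : BddBelow A := ⟨0, fun s hs => hs.1.1⟩
    have hAclosed : IsClosed A :=
      hyc.preimage_isClosed_of_isClosed isClosed_Icc isClosed_Ici
    set τ := sInf A with hτdef
    have hτA : τ ∈ A := hAclosed.csInf_mem hAne hAbdd
    have hτIcc : τ ∈ Icc (0:ℝ) T := hτA.1
    have hτy : b' ≤ y τ := hτA.2
    -- for s < τ in [0,T], y s < b'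
    have hlt : ∀ s ∈ Icc (0:ℝ) T, s < τ → y s < b' := by
      intro s hs hsτ
      by_contra hge
      push_neg at hge
      exact absurd (csInf_le hAbdd ⟨hs, hge⟩) (not_le.mpr hsτ)
    -- y' ≤ 0 a.e. on Icc 0 τ
    have hsub : Icc (0:ℝ) τ ⊆ Icc 0 T := Icc_subset_Icc le_rfl hτIcc.2
    have hineq' : ∀ᵐ s ∂(volume.restrict (Icc (0:ℝ) τ)),
        y' s ≤ -g s * (1 - c * y s ^ 4) :=
      Filter.Eventually.filter_mono
        (ae_mono (Measure.restrict_mono hsub le_rfl)) hineq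
    have hmem : ∀ᵐ s ∂(volume.restrict (Icc (0:ℝ) τ)), s ∈ Icc (0:ℝ) τ :=
      ae_restrict_mem measurableSet_Icc
    have hneτ : ∀ᵐ s ∂(volume.restrict (Icc (0:ℝ) τ)), s ≠ τ := by
      refine (MeasureTheory.ae_iff).mpr ?_
      have : (volume.restrict (Icc (0:ℝ) τ)) {s | ¬ s ≠ τ} ≤ volume {τ} := by
        refine le_trans (measure_mono ?_) (Measure.restrict_le_self _)
        intro s hs; simpa using hs
      simpa [Real.volume_singleton] using le_antisymm (by simpa [Real.volume_singleton] using this) (zero_le _)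
    have hy'nonpos : ∀ᵐ s ∂(volume.restrict (Icc (0:ℝ) τ)), y' s ≤ 0 := by
      filter_upwards [hineq', hmem, hneτ] with s hs hsmem hsne
      have hsT : s ∈ Icc (0:ℝ) T := hsub hsmem
      have hslt : s < τ := lt_of_le_of_ne hsmem.2 hsne
      have hys : y s < b' := hlt s hsT hslt
      have hysnn : 0 ≤ y s := hynn s hsT
      have h4 : c * y s ^ 4 < 1 := by
        have : y s ^ 4 ≤ b' ^ 4 := pow_le_pow_left₀ hysnn hys.le 4
        nlinarith
      have : -g s * (1 - c * y s ^ 4) ≤ 0 := by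
        have hgs := hgnn s hsT
        nlinarith
      linarith
    have hint : (∫ s in (0:ℝ)..τ, y' s) ≤ 0 := by
      have : (0:ℝ) ≤ ∫ s in (0:ℝ)..τ, -y' s := by
        refine intervalIntegral.integral_nonneg_of_ae_restrict hτIcc.1 ?_
        filter_upwards [hy'nonpos] with s hs
        simpa using hs
      rw [intervalIntegral.integral_neg] at this
      linarith
    have : y τ ≤ y 0 := by
      rw [hAC τ hτIcc]; linarith
    linarith [hb'gt, hτy]
  intro t ht
  refine ⟨?_, key t ht⟩
  have hytnn := hynn t ht
  have : y t ^ 4 ≤ y 0 ^ 4 := pow_le_pow_left₀ hytnn (key t ht) 4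
  nlinarith
end

section
/- Let d, φ be smooth 2π-periodic functions with zero mean. Then 2∫₀^{2π} d_{xx}(d_x φ_x)_{xx} dx = ∫₀^{2π} d_{xx}² φ_{xx} dx − 2∫₀^{2π} d_{xxx} d_x φ_{xx} dx, and its absolute value is bounded by 3‖d_{xxx}‖_{L²}‖d_x‖_{L²}‖φ_{xx}‖_{L∞}. -/
open MeasureTheory intervalIntegral Real

private lemma tpp : (0:ℝ) < 2 * Real.pi := by positivity

private lemma per_deriv {f : ℝ → ℝ} {c : ℝ} (hf : Function.Periodic f c) :
    Function.Periodic (deriv f) c := fun x => by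
  have h : (fun y => f (y + c)) = f := funext fun y => hf y
  rw [← deriv_comp_add_const, h]

private lemma ibp {F G F' G' : ℝ → ℝ}
    (hF : ∀ x, HasDerivAt F (F' x) x) (hG : ∀ x, HasDerivAt G (G' x) x)
    (hcF' : Continuous F') (hcG' : Continuous G')
    (hFp : F (2 * Real.pi) = F 0) (hGp : G (2 * Real.pi) = G 0) :
    (∫ y in (0:ℝ)..(2 * Real.pi), F' y * G y)
      = - ∫ y in (0:ℝ)..(2 * Real.pi), F y * G' y := by
  have hcF : Continuous F := continuous_iff_continuousAt.2 fun x => (hF x).continuousAt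
  have hcG : Continuous G := continuous_iff_continuousAt.2 fun x => (hG x).continuousAt
  have key := intervalIntegral.integral_deriv_mul_eq_sub_of_hasDerivAt
      (a := 0) (b := 2 * Real.pi) hcF.continuousOn hcG.continuousOn
      (fun x _ => hF x) (fun x _ => hG x)
      (hcF'.intervalIntegrable _ _) (hcG'.intervalIntegrable _ _)
  rw [hFp, hGp, sub_self] at key
  rw [intervalIntegral.integral_add (f := fun y => F' y * G y) (g := fun y => F y * G' y) ((hcF'.mul hcG).intervalIntegrable _ _)
      ((hcF.mul hcG').intervalIntegrable _ _)] at key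
  linarith

private lemma cs {f g : ℝ → ℝ} (hf : Continuous f) (hg : Continuous g) :
    (∫ y in (0:ℝ)..(2 * Real.pi), |f y * g y|)
      ≤ (∫ y in (0:ℝ)..(2 * Real.pi), f y ^ 2) ^ ((1:ℝ)/2)
        * (∫ y in (0:ℝ)..(2 * Real.pi), g y ^ 2) ^ ((1:ℝ)/2) := by
  have h2π : (0:ℝ) ≤ 2 * Real.pi := tpp.le
  rw [intervalIntegral.integral_of_le h2π, intervalIntegral.integral_of_le h2π,
    intervalIntegral.integral_of_le h2π]
  set μ := volume.restrict (Set.Ioc (0:ℝ) (2 * Real.pi)) with hμ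
  haveI : IsFiniteMeasure μ := ⟨by
    rw [hμ, Measure.restrict_apply_univ]; exact measure_Ioc_lt_top⟩
  have hmem : ∀ {h : ℝ → ℝ}, Continuous h → MemLp (fun y => |h y|) (ENNReal.ofReal 2) μ := by
    intro h hh
    obtain ⟨C, hC⟩ := (isCompact_Icc (a := (0:ℝ)) (b := 2 * Real.pi)).exists_bound_of_continuousOn
      hh.continuousOn
    refine MemLp.of_bound hh.abs.aestronglyMeasurable C ?_
    rw [hμ, ae_restrict_iff' measurableSet_Ioc]
    filter_upwards with x hx
    simpa [abs_abs] using hC x (Set.Ioc_subset_Icc_self hx)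
  have hpq : Real.HolderConjugate 2 2 := Real.HolderConjugate.two_two
  have key := MeasureTheory.integral_mul_le_Lp_mul_Lq_of_nonneg (μ := μ) hpq
    (f := fun y => |f y|) (g := fun y => |g y|)
    (Filter.Eventually.of_forall fun x => abs_nonneg _)
    (Filter.Eventually.of_forall fun x => abs_nonneg _) (hmem hf) (hmem hg)
  have e2 : ∀ x : ℝ, |x| ^ (2:ℝ) = x ^ 2 := fun x => by
    rw [show (2:ℝ) = ((2:ℕ):ℝ) by norm_num, Real.rpow_natCast, sq_abs]
  simp only [e2] at key
  calc (∫ y in Set.Ioc (0:ℝ) (2 * Real.pi), |f y * g y|)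
      = ∫ a, |f a| * |g a| ∂μ := by simp only [abs_mul]; rfl
    _ ≤ (∫ a, f a ^ 2 ∂μ) ^ ((1:ℝ)/2) * (∫ a, g a ^ 2 ∂μ) ^ ((1:ℝ)/2) := by
        exact key
    _ = _ := rfl

private lemma sup_bound {f : ℝ → ℝ} (hf : Continuous f)
    (hp : Function.Periodic f (2 * Real.pi)) :
    ∀ x, |f x| ≤ ⨆ z : ℝ, |f z| := by
  have hper : Function.Periodic (fun x => |f x|) (2 * Real.pi) := fun x => by
    simp [hp x]
  have himg := hper.image_Icc tpp 0
  have hbdd : BddAbove (Set.range fun x => |f x|) := by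
    rw [← himg]
    exact (isCompact_Icc.image hf.abs).bddAbove
  exact fun x => le_ciSup hbdd x

/-- Term B of the energy estimate: integration-by-parts identity and bound
`|2∫ d_{xx}(d_x φ_x)_{xx}| ≤ 3 ‖d_{xxx}‖ ‖d_x‖ ‖φ_{xx}‖_{L∞}`. -/
theorem term_B_identity_and_bound (d φ : ℝ → ℝ)
    (hdper : Function.Periodic d (2 * Real.pi))
    (hφper : Function.Periodic φ (2 * Real.pi))
    (hdreg : ContDiff ℝ (⊤ : ℕ∞) d) (hφreg : ContDiff ℝ (⊤ : ℕ∞) φ)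
    (hdmean : ∫ y in (0:ℝ)..(2 * Real.pi), d y = 0)
    (hφmean : ∫ y in (0:ℝ)..(2 * Real.pi), φ y = 0) :
    (2 * ∫ y in (0:ℝ)..(2 * Real.pi),
        iteratedDeriv 2 d y * iteratedDeriv 2 (fun z => deriv d z * deriv φ z) y)
      = (∫ y in (0:ℝ)..(2 * Real.pi),
          (iteratedDeriv 2 d y) ^ 2 * iteratedDeriv 2 φ y)
        - 2 * ∫ y in (0:ℝ)..(2 * Real.pi),
            iteratedDeriv 3 d y * iteratedDeriv 1 d y * iteratedDeriv 2 φ y ∧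
    |2 * ∫ y in (0:ℝ)..(2 * Real.pi),
        iteratedDeriv 2 d y * iteratedDeriv 2 (fun z => deriv d z * deriv φ z) y| ≤
      3 * (∫ y in (0:ℝ)..(2 * Real.pi), (iteratedDeriv 3 d y) ^ 2) ^ ((1:ℝ)/2)
        * (∫ y in (0:ℝ)..(2 * Real.pi), (iteratedDeriv 1 d y) ^ 2) ^ ((1:ℝ)/2)
        * (⨆ x : ℝ, |iteratedDeriv 2 φ x|) := by
  -- regularity of derivatives
  have hd' : ContDiff ℝ (((⊤:ℕ∞)):WithTop ℕ∞) d := hdreg.of_le (by simp)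
  have hφ' : ContDiff ℝ (((⊤:ℕ∞)):WithTop ℕ∞) φ := hφreg.of_le (by simp)
  have rd1 : ContDiff ℝ (((⊤:ℕ∞)):WithTop ℕ∞) (deriv d) := (contDiff_infty_iff_deriv.mp hd').2
  have rd2 : ContDiff ℝ (((⊤:ℕ∞)):WithTop ℕ∞) (deriv (deriv d)) :=
    (contDiff_infty_iff_deriv.mp rd1).2
  have rd3 : ContDiff ℝ (((⊤:ℕ∞)):WithTop ℕ∞) (deriv (deriv (deriv d))) :=
    (contDiff_infty_iff_deriv.mp rd2).2
  have rp1 : ContDiff ℝ (((⊤:ℕ∞)):WithTop ℕ∞) (deriv φ) := (contDiff_infty_iff_deriv.mp hφ').2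
  have rp2 : ContDiff ℝ (((⊤:ℕ∞)):WithTop ℕ∞) (deriv (deriv φ)) :=
    (contDiff_infty_iff_deriv.mp rp1).2
  have rp3 : ContDiff ℝ (((⊤:ℕ∞)):WithTop ℕ∞) (deriv (deriv (deriv φ))) :=
    (contDiff_infty_iff_deriv.mp rp2).2
  have cd1 : Continuous (deriv d) := rd1.continuous
  have cd2 : Continuous (deriv (deriv d)) := rd2.continuous
  have cd3 : Continuous (deriv (deriv (deriv d))) := rd3.continuous
  have cp1 : Continuous (deriv φ) := rp1.continuous
  have cp2 : Continuous (deriv (deriv φ)) := rp2.continuous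
  have cp3 : Continuous (deriv (deriv (deriv φ))) := rp3.continuous
  have dd1 : Differentiable ℝ (deriv d) := rd1.differentiable (by simp)
  have dd2 : Differentiable ℝ (deriv (deriv d)) := rd2.differentiable (by simp)
  have dp1 : Differentiable ℝ (deriv φ) := rp1.differentiable (by simp)
  have dp2 : Differentiable ℝ (deriv (deriv φ)) := rp2.differentiable (by simp)
  have Hd1 : ∀ x, HasDerivAt (deriv d) (deriv (deriv d) x) x := fun x => (dd1 x).hasDerivAt
  have Hd2 : ∀ x, HasDerivAt (deriv (deriv d)) (deriv (deriv (deriv d)) x) x :=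
    fun x => (dd2 x).hasDerivAt
  have Hp1 : ∀ x, HasDerivAt (deriv φ) (deriv (deriv φ) x) x := fun x => (dp1 x).hasDerivAt
  have Hp2 : ∀ x, HasDerivAt (deriv (deriv φ)) (deriv (deriv (deriv φ)) x) x :=
    fun x => (dp2 x).hasDerivAt
  -- periodicity and boundary values
  have pd1 : Function.Periodic (deriv d) (2 * Real.pi) := per_deriv hdper
  have pd2 : Function.Periodic (deriv (deriv d)) (2 * Real.pi) := per_deriv pd1
  have pp1 : Function.Periodic (deriv φ) (2 * Real.pi) := per_deriv hφper
  have pp2 : Function.Periodic (deriv (deriv φ)) (2 * Real.pi) := per_deriv pp1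
  have bd1 : deriv d (2 * Real.pi) = deriv d 0 := by simpa using pd1 0
  have bd2 : deriv (deriv d) (2 * Real.pi) = deriv (deriv d) 0 := by simpa using pd2 0
  have bp1 : deriv φ (2 * Real.pi) = deriv φ 0 := by simpa using pp1 0
  have bp2 : deriv (deriv φ) (2 * Real.pi) = deriv (deriv φ) 0 := by simpa using pp2 0
  -- iterated derivatives
  have e1 : iteratedDeriv 1 d = deriv d := iteratedDeriv_one
  have e2 : iteratedDeriv 2 d = deriv (deriv d) := by
    rw [show (2:ℕ) = 1 + 1 from rfl, iteratedDeriv_succ, iteratedDeriv_one]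
  have e3 : iteratedDeriv 3 d = deriv (deriv (deriv d)) := by
    rw [show (3:ℕ) = 2 + 1 from rfl, iteratedDeriv_succ, e2]
  have f2 : iteratedDeriv 2 φ = deriv (deriv φ) := by
    rw [show (2:ℕ) = 1 + 1 from rfl, iteratedDeriv_succ, iteratedDeriv_one]
  -- pointwise expansion of the second derivative of the product
  have hexp : ∀ z, iteratedDeriv 2 (fun z => deriv d z * deriv φ z) z
      = deriv (deriv (deriv d)) z * deriv φ z
        + 2 * (deriv (deriv d) z * deriv (deriv φ) z)
        + deriv d z * deriv (deriv (deriv φ)) z := by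
    have h1 : deriv (fun z => deriv d z * deriv φ z)
        = fun z => deriv (deriv d) z * deriv φ z + deriv d z * deriv (deriv φ) z := by
      funext z; exact deriv_mul (dd1 z) (dp1 z)
    intro z
    rw [show (2:ℕ) = 1 + 1 from rfl, iteratedDeriv_succ, iteratedDeriv_one, h1,
      deriv_fun_add (f := fun z => deriv (deriv d) z * deriv φ z)
        (g := fun z => deriv d z * deriv (deriv φ) z) ((dd2 z).mul (dp1 z)) ((dd1 z).mul (dp2 z)),
      deriv_fun_mul (dd2 z) (dp1 z), deriv_fun_mul (dd1 z) (dp2 z)]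
    ring
  -- the three integration-by-parts identities
  have h₁ : (∫ y in (0:ℝ)..(2 * Real.pi),
        (deriv (deriv (deriv d)) y * deriv (deriv d) y
          + deriv (deriv d) y * deriv (deriv (deriv d)) y) * deriv φ y)
      = - ∫ y in (0:ℝ)..(2 * Real.pi),
          (deriv (deriv d) y * deriv (deriv d) y) * deriv (deriv φ) y :=
    ibp (fun x => (Hd2 x).mul (Hd2 x)) Hp1
      ((cd3.mul cd2).add (cd2.mul cd3)) cp2 (by rw [bd2]) bp1
  have h₂ : (∫ y in (0:ℝ)..(2 * Real.pi),
        deriv (deriv (deriv φ)) y * (deriv d y * deriv (deriv d) y))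
      = - ∫ y in (0:ℝ)..(2 * Real.pi),
          deriv (deriv φ) y * (deriv (deriv d) y * deriv (deriv d) y
            + deriv d y * deriv (deriv (deriv d)) y) :=
    ibp Hp2 (fun x => (Hd1 x).mul (Hd2 x)) cp3
      ((cd2.mul cd2).add (cd1.mul cd3)) bp2 (by rw [bd1, bd2])
  have h₃ : (∫ y in (0:ℝ)..(2 * Real.pi), deriv (deriv d) y * deriv (deriv d) y)
      = - ∫ y in (0:ℝ)..(2 * Real.pi), deriv d y * deriv (deriv (deriv d)) y :=
    ibp Hd1 Hd2 cd2 cd3 bd1 bd2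
  -- names for the basic integrals
  set T2 : ℝ := ∫ y in (0:ℝ)..(2 * Real.pi), (deriv (deriv d) y) ^ 2 * deriv (deriv φ) y
    with hT2def
  set T5 : ℝ := ∫ y in (0:ℝ)..(2 * Real.pi),
      deriv (deriv (deriv d)) y * deriv d y * deriv (deriv φ) y with hT5def
  -- rewrite RHS of h₁ and h₂
  have hc1 : (∫ y in (0:ℝ)..(2 * Real.pi),
      (deriv (deriv d) y * deriv (deriv d) y) * deriv (deriv φ) y) = T2 := by
    rw [hT2def]; exact intervalIntegral.integral_congr fun y _ => by ring
  have hc2 : (∫ y in (0:ℝ)..(2 * Real.pi),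
      deriv (deriv φ) y * (deriv (deriv d) y * deriv (deriv d) y
        + deriv d y * deriv (deriv (deriv d)) y)) = T2 + T5 := by
    rw [intervalIntegral.integral_congr (g := fun y =>
        (deriv (deriv d) y) ^ 2 * deriv (deriv φ) y
          + deriv (deriv (deriv d)) y * deriv d y * deriv (deriv φ) y)
        (fun y _ => by ring),
      intervalIntegral.integral_add (f := fun y => (deriv (deriv d) y) ^ 2 * deriv (deriv φ) y)
          (g := fun y => deriv (deriv (deriv d)) y * deriv d y * deriv (deriv φ) y)
          (((cd2.pow 2).mul cp2).intervalIntegrable _ _)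
        (((cd3.mul cd1).mul cp2).intervalIntegrable _ _)]
  -- splitting the main integral
  have h2J : (2:ℝ) * (∫ y in (0:ℝ)..(2 * Real.pi),
        deriv (deriv d) y * iteratedDeriv 2 (fun z => deriv d z * deriv φ z) y)
      = (∫ y in (0:ℝ)..(2 * Real.pi),
          (deriv (deriv (deriv d)) y * deriv (deriv d) y
            + deriv (deriv d) y * deriv (deriv (deriv d)) y) * deriv φ y)
        + ((4:ℝ) * T2
          + (2:ℝ) * ∫ y in (0:ℝ)..(2 * Real.pi),
              deriv (deriv (deriv φ)) y * (deriv d y * deriv (deriv d) y)) := by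
    rw [← intervalIntegral.integral_const_mul]
    rw [intervalIntegral.integral_congr (g := fun y =>
        (deriv (deriv (deriv d)) y * deriv (deriv d) y
          + deriv (deriv d) y * deriv (deriv (deriv d)) y) * deriv φ y
        + ((4:ℝ) * ((deriv (deriv d) y) ^ 2 * deriv (deriv φ) y)
          + (2:ℝ) * (deriv (deriv (deriv φ)) y * (deriv d y * deriv (deriv d) y))))
      (fun y _ => by rw [hexp y]; ring)]
    rw [intervalIntegral.integral_add
        (f := fun y => (deriv (deriv (deriv d)) y * deriv (deriv d) y
          + deriv (deriv d) y * deriv (deriv (deriv d)) y) * deriv φ y)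
        (g := fun y => (4:ℝ) * ((deriv (deriv d) y) ^ 2 * deriv (deriv φ) y)
          + (2:ℝ) * (deriv (deriv (deriv φ)) y * (deriv d y * deriv (deriv d) y)))
        ((((cd3.mul cd2).add (cd2.mul cd3)).mul cp1).intervalIntegrable _ _)
        (((continuous_const.mul ((cd2.pow 2).mul cp2)).add
          (continuous_const.mul (cp3.mul (cd1.mul cd2)))).intervalIntegrable _ _),
      intervalIntegral.integral_add
        (f := fun y => (4:ℝ) * ((deriv (deriv d) y) ^ 2 * deriv (deriv φ) y))
        (g := fun y => (2:ℝ) * (deriv (deriv (deriv φ)) y * (deriv d y * deriv (deriv d) y)))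
        ((continuous_const.mul ((cd2.pow 2).mul cp2)).intervalIntegrable _ _)
        ((continuous_const.mul (cp3.mul (cd1.mul cd2))).intervalIntegrable _ _),
      intervalIntegral.integral_const_mul, intervalIntegral.integral_const_mul, hT2def]
  rw [hc1] at h₁
  rw [hc2] at h₂
  -- the identity
  have key : (2:ℝ) * (∫ y in (0:ℝ)..(2 * Real.pi),
        deriv (deriv d) y * iteratedDeriv 2 (fun z => deriv d z * deriv φ z) y)
      = T2 - 2 * T5 := by
    rw [h2J, h₁, h₂]; ring
  simp only [e1, e2, e3, f2]
  refine ⟨key, ?_⟩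
  -- the bound
  rw [key]
  set K : ℝ := ⨆ x : ℝ, |deriv (deriv φ) x| with hKdef
  set N3 : ℝ := (∫ y in (0:ℝ)..(2 * Real.pi), (deriv (deriv (deriv d)) y) ^ 2) ^ ((1:ℝ)/2)
    with hN3def
  set N1 : ℝ := (∫ y in (0:ℝ)..(2 * Real.pi), (deriv d y) ^ 2) ^ ((1:ℝ)/2) with hN1def
  have hK : ∀ x, |deriv (deriv φ) x| ≤ K := by
    rw [hKdef]; exact sup_bound cp2 pp2
  have hK0 : (0:ℝ) ≤ K := le_trans (abs_nonneg _) (hK 0)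
  have hD2sq : (∫ y in (0:ℝ)..(2 * Real.pi), (deriv (deriv d) y) ^ 2) ≤ N3 * N1 := by
    calc (∫ y in (0:ℝ)..(2 * Real.pi), (deriv (deriv d) y) ^ 2)
        = ∫ y in (0:ℝ)..(2 * Real.pi), deriv (deriv d) y * deriv (deriv d) y :=
          intervalIntegral.integral_congr fun y _ => by ring
      _ = - ∫ y in (0:ℝ)..(2 * Real.pi), deriv d y * deriv (deriv (deriv d)) y := h₃
      _ ≤ |∫ y in (0:ℝ)..(2 * Real.pi), deriv d y * deriv (deriv (deriv d)) y| :=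
          neg_le_abs _
      _ ≤ ∫ y in (0:ℝ)..(2 * Real.pi), |deriv d y * deriv (deriv (deriv d)) y| :=
          intervalIntegral.abs_integral_le_integral_abs tpp.le
      _ ≤ (∫ y in (0:ℝ)..(2 * Real.pi), (deriv d y) ^ 2) ^ ((1:ℝ)/2)
          * (∫ y in (0:ℝ)..(2 * Real.pi), (deriv (deriv (deriv d)) y) ^ 2) ^ ((1:ℝ)/2) :=
          cs cd1 cd3
      _ = N3 * N1 := by rw [hN3def, hN1def]; ring
  have hB2 : |T2| ≤ N3 * N1 * K := by
    calc |T2| ≤ ∫ y in (0:ℝ)..(2 * Real.pi), |(deriv (deriv d) y) ^ 2 * deriv (deriv φ) y| := by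
          rw [hT2def]; exact intervalIntegral.abs_integral_le_integral_abs tpp.le
      _ ≤ ∫ y in (0:ℝ)..(2 * Real.pi), (deriv (deriv d) y) ^ 2 * K := by
          refine intervalIntegral.integral_mono_on tpp.le
            ((((cd2.pow 2).mul cp2).abs).intervalIntegrable _ _)
            (((cd2.pow 2).mul continuous_const).intervalIntegrable _ _) fun y _ => ?_
          rw [abs_mul, abs_of_nonneg (sq_nonneg _)]
          exact mul_le_mul_of_nonneg_left (hK y) (sq_nonneg _)
      _ = (∫ y in (0:ℝ)..(2 * Real.pi), (deriv (deriv d) y) ^ 2) * K :=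
          intervalIntegral.integral_mul_const _ _
      _ ≤ N3 * N1 * K := mul_le_mul_of_nonneg_right hD2sq hK0
  have hE : |T5| ≤ N3 * N1 * K := by
    calc |T5| ≤ ∫ y in (0:ℝ)..(2 * Real.pi),
          |deriv (deriv (deriv d)) y * deriv d y * deriv (deriv φ) y| := by
          rw [hT5def]; exact intervalIntegral.abs_integral_le_integral_abs tpp.le
      _ ≤ ∫ y in (0:ℝ)..(2 * Real.pi), |deriv (deriv (deriv d)) y * deriv d y| * K := by
          refine intervalIntegral.integral_mono_on tpp.le
            ((((cd3.mul cd1).mul cp2).abs).intervalIntegrable _ _)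
            (((cd3.mul cd1).abs.mul continuous_const).intervalIntegrable _ _) fun y _ => ?_
          rw [abs_mul]
          exact mul_le_mul_of_nonneg_left (hK y) (abs_nonneg _)
      _ = (∫ y in (0:ℝ)..(2 * Real.pi), |deriv (deriv (deriv d)) y * deriv d y|) * K :=
          intervalIntegral.integral_mul_const _ _
      _ ≤ N3 * N1 * K := mul_le_mul_of_nonneg_right (cs cd3 cd1) hK0
  have habs : |T2 - 2 * T5| ≤ |T2| + |2 * T5| := abs_sub _ _
  have habs2 : |2 * T5| = 2 * |T5| := by rw [abs_mul, abs_two]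
  have h3 : 3 * N3 * N1 * K = N3 * N1 * K + 2 * (N3 * N1 * K) := by ring
  linarith
end
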